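/- arXiv:2603.20353 — 2 statements merged into one kernel-verified Lean document; each statement's English description precedes it below -/
import Mathlib

section
/- Let M, N be natural numbers, let u, v : Fin N → EuclideanSpace ℝ (Fin M), let Δ ∈ EuclideanSpace ℝ (Fin M), and let R be an M×M real orthogonal matrix (RᵀR = 1) such that vᵢ = R • (uᵢ − Δ) for every i. Then for every pair of indices i, j, 2⟪uᵢ − uⱼ, Δ⟫ = ‖uᵢ‖² − ‖uⱼ‖² − ‖vᵢ‖² + ‖vⱼ‖². -/
/-! An orthogonal `R` preserves norms, so `‖vᵢ‖ = ‖uᵢ - Δ‖`. Expanding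
`‖uᵢ - Δ‖² = ‖uᵢ‖² - 2⟪uᵢ, Δ⟫ + ‖Δ‖²` and subtracting the same identity for `j`
cancels `‖Δ‖²` and leaves an equation that is linear in `Δ`. -/

open scoped RealInnerProductSpace Matrix

theorem Matrix.norm_toLp_mulVec_of_transpose_mul_self_eq_one {ι : Type*} [Fintype ι]
    [DecidableEq ι] {R : Matrix ι ι ℝ} (hR : Rᵀ * R = 1) (x : EuclideanSpace ℝ ι) :
    ‖WithLp.toLp 2 (R *ᵥ x.ofLp)‖ = ‖x‖ := by
  rw [← sq_eq_sq₀ (norm_nonneg _) (norm_nonneg _), ← real_inner_self_eq_norm_sq,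
    ← real_inner_self_eq_norm_sq, EuclideanSpace.inner_toLp_toLp,
    EuclideanSpace.inner_eq_star_dotProduct, star_trivial, star_trivial, Matrix.dotProduct_mulVec,
    ← Matrix.mulVec_transpose, Matrix.mulVec_mulVec, hR, Matrix.one_mulVec]

/-- The system `BΔ = ½b` of Theorem 1: if `vᵢ = R (uᵢ - Δ)` with `R` orthogonal,
then `2⟪uᵢ - uⱼ, Δ⟫ = ‖uᵢ‖² - ‖uⱼ‖² - ‖vᵢ‖² + ‖vⱼ‖²` for every pair `i, j`. -/
theorem linear_system_of_orthogonal_shift (M N : ℕ)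
    (u v : Fin N → EuclideanSpace ℝ (Fin M))
    (Δ : EuclideanSpace ℝ (Fin M)) (R : Matrix (Fin M) (Fin M) ℝ)
    (hR : Rᵀ * R = 1)
    (hv : ∀ i, v i = R.mulVec (u i - Δ)) :
    ∀ i j, 2 * ⟪u i - u j, Δ⟫ = ‖u i‖ ^ 2 - ‖u j‖ ^ 2 - ‖v i‖ ^ 2 + ‖v j‖ ^ 2 := by
  have norm_v : ∀ i, ‖v i‖ = ‖u i - Δ‖ := fun i => by
    rw [← WithLp.toLp_ofLp (p := 2) (v i), hv i]
    exact Matrix.norm_toLp_mulVec_of_transpose_mul_self_eq_one hR (u i - Δ)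
  intro i j
  rw [norm_v i, norm_v j, norm_sub_sq_real, norm_sub_sq_real, inner_sub_left]
  ring
end

section
/- Let M, N be natural numbers, let u, v : Fin N → EuclideanSpace ℝ (Fin M), and suppose the family of pairwise difference vectors {uᵢ − uⱼ : i, j ∈ Fin N} spans EuclideanSpace ℝ (Fin M). If Δ and Δ' are two vectors in EuclideanSpace ℝ (Fin M) such that ‖uᵢ − Δ‖ = ‖vᵢ‖ and ‖uᵢ − Δ'‖ = ‖vᵢ‖ for every i, then Δ = Δ'. In particular, under the spanning hypothesis, the shift Δ in Theorem 1 is uniquely determined by the norm data {‖uᵢ‖, ‖vᵢ‖, uᵢ}. -/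
/-!
Since `‖x - a‖² - ‖x - b‖² = ‖a‖² - ‖b‖² - 2⟪x, a - b⟫` is affine in `x`, two shifts `Δ`, `Δ'`
fitting the same norm data make it vanish at every `uᵢ`, so `Δ - Δ'` is orthogonal to every
difference `uᵢ - uⱼ`. These span the space, hence `Δ - Δ' = 0`.
-/

open RealInnerProductSpace

section

variable {E : Type*} [NormedAddCommGroup E] [InnerProductSpace ℝ E]

theorem two_mul_inner_sub_eq_of_norm_sub_eq {x a b : E} (h : ‖x - a‖ = ‖x - b‖) :
    2 * ⟪x, a - b⟫ = ‖a‖ ^ 2 - ‖b‖ ^ 2 := by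
  have hsq : ‖x - a‖ ^ 2 = ‖x - b‖ ^ 2 := by rw [h]
  rw [norm_sub_sq_real, norm_sub_sq_real] at hsq
  rw [inner_sub_right]
  linarith

theorem inner_sub_sub_eq_zero_of_norm_sub_eq {x y a b : E}
    (hx : ‖x - a‖ = ‖x - b‖) (hy : ‖y - a‖ = ‖y - b‖) : ⟪x - y, a - b⟫ = 0 := by
  have hx' := two_mul_inner_sub_eq_of_norm_sub_eq hx
  have hy' := two_mul_inner_sub_eq_of_norm_sub_eq hy
  rw [inner_sub_left]
  linarith

theorem eq_of_norm_sub_eq_of_span_sub_eq_top {ι : Type*} {u : ι → E}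
    (hspan : Submodule.span ℝ (Set.range fun p : ι × ι => u p.1 - u p.2) = ⊤) {a b : E}
    (h : ∀ i, ‖u i - a‖ = ‖u i - b‖) : a = b := by
  have hle : Submodule.span ℝ (Set.range fun p : ι × ι => u p.1 - u p.2) ≤ (ℝ ∙ (a - b))ᗮ := by
    rw [Submodule.span_le]
    rintro _ ⟨⟨i, j⟩, rfl⟩
    exact Submodule.mem_orthogonal_singleton_iff_inner_left.mpr
      (inner_sub_sub_eq_zero_of_norm_sub_eq (h i) (h j))
  rw [hspan, top_le_iff, Submodule.orthogonal_eq_top_iff, Submodule.span_singleton_eq_bot] at hle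
  exact sub_eq_zero.mp hle

end

/-- Uniqueness of the shift in Theorem 1: if the pairwise differences `uᵢ - uⱼ`
span the whole space, then a shift `Δ` with `‖uᵢ - Δ‖ = ‖vᵢ‖` for all `i` is
uniquely determined. -/
theorem shift_unique_of_span (M N : ℕ)
    (u v : Fin N → EuclideanSpace ℝ (Fin M))
    (hspan : Submodule.span ℝ
      (Set.range fun p : Fin N × Fin N => u p.1 - u p.2) = ⊤)
    (Δ Δ' : EuclideanSpace ℝ (Fin M))
    (hΔ : ∀ i, ‖u i - Δ‖ = ‖v i‖)
    (hΔ' : ∀ i, ‖u i - Δ'‖ = ‖v i‖) :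
    Δ = Δ' :=
  eq_of_norm_sub_eq_of_span_sub_eq_top hspan fun i => (hΔ i).trans (hΔ' i).symm
end
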